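/- arXiv:1709.06790 — 5 statements merged into one kernel-verified Lean document; each statement's English description precedes it below -/
import Mathlib

section
/- Let m > 1, n ≥ k ≥ 1 be integers and x₁, x₂ ∈ ℤ. Define substr(x, i, j) = (x mod m^i − x mod m^j)/m^j, and set y₁ = substr(x₁, n, n−k), y₂ = substr(x₂, n, n−k). Then (substr(x₁ + x₂, n, n−k) − (y₁ + y₂)) mod m^k ∈ {0, 1}. -/
/-- `substr m x i j` is the integer formed by the base-`m` digits of `x` in
positions `j` through `i-1`, i.e. `(x mod m^i − x mod m^j) / m^j`
(`%` on `ℤ` is the least nonnegative residue for a positive modulus). -/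
def substr (m : ℕ) (x : ℤ) (i j : ℕ) : ℤ :=
  (x % (m : ℤ) ^ i - x % (m : ℤ) ^ j) / (m : ℤ) ^ j

theorem stmt0 (m : ℕ) (hm : 1 < m) (n k : ℕ) (hk : 1 ≤ k) (hkn : k ≤ n)
    (x₁ x₂ : ℤ) :
    (substr m (x₁ + x₂) n (n - k) -
        (substr m x₁ n (n - k) + substr m x₂ n (n - k))) % (m : ℤ) ^ k ∈
      ({0, 1} : Set ℤ) := by
  have hm' : (1 : ℤ) < (m : ℤ) := by exact_mod_cast hm
  set M : ℤ := (m : ℤ) ^ (n - k) with hMdef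
  set N : ℤ := (m : ℤ) ^ n with hNdef
  have hMpos : 0 < M := pow_pos (by linarith) _
  have hNM : N = M * (m : ℤ) ^ k := by
    rw [hMdef, hNdef, ← pow_add]
    congr 1
    omega
  have hNpos : 0 < N := pow_pos (by linarith) _
  have hmk : (1 : ℤ) < (m : ℤ) ^ k := one_lt_pow₀ hm' (by omega)
  have hsub : ∀ x : ℤ, substr m x n (n - k) = x % N / M := by
    intro x
    have h1 : x % N % M = x % M :=
      Int.emod_emod_of_dvd x ⟨(m : ℤ) ^ k, hNM⟩
    have h2 : x % N - x % M = M * (x % N / M) := by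
      have h3 := Int.emod_add_mul_ediv (x % N) M
      linarith [h1]
    rw [substr, ← hMdef, ← hNdef, h2, Int.mul_ediv_cancel_left _ hMpos.ne']
  rw [hsub, hsub, hsub]
  set a := x₁ % N with hadef
  set b := x₂ % N with hbdef
  have ha0 : 0 ≤ a := Int.emod_nonneg _ hNpos.ne'
  have ha1 : a < N := Int.emod_lt_of_pos _ hNpos
  have hb0 : 0 ≤ b := Int.emod_nonneg _ hNpos.ne'
  have hb1 : b < N := Int.emod_lt_of_pos _ hNpos
  have hab : (x₁ + x₂) % N = (a + b) % N := Int.add_emod x₁ x₂ N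
  set c := (a + b) / N with hcdef
  have hc : c = 0 ∨ c = 1 := by
    have h1 : 0 ≤ c := Int.ediv_nonneg (by linarith) hNpos.le
    have h2 : c < 2 := by
      rw [hcdef, Int.ediv_lt_iff_lt_mul hNpos]; linarith
    omega
  set ε := (a % M + b % M) / M with hεdef
  have hra0 : 0 ≤ a % M := Int.emod_nonneg _ hMpos.ne'
  have hra1 : a % M < M := Int.emod_lt_of_pos _ hMpos
  have hrb0 : 0 ≤ b % M := Int.emod_nonneg _ hMpos.ne'
  have hrb1 : b % M < M := Int.emod_lt_of_pos _ hMpos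
  have hε : ε = 0 ∨ ε = 1 := by
    have h1 : 0 ≤ ε := Int.ediv_nonneg (by linarith) hMpos.le
    have h2 : ε < 2 := by
      rw [hεdef, Int.ediv_lt_iff_lt_mul hMpos]; linarith
    omega
  -- (a+b)/M = a/M + b/M + ε
  have key1 : (a + b) / M = a / M + b / M + ε := by
    have hsum : a + b = (a % M + b % M) + M * (a / M + b / M) := by
      have := Int.emod_add_mul_ediv a M
      have := Int.emod_add_mul_ediv b M
      linarith [Int.emod_add_mul_ediv a M, Int.emod_add_mul_ediv b M]
    rw [hsum, Int.add_mul_ediv_left _ _ hMpos.ne']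
    ring
  -- ((a+b) % N) / M = (a+b)/M - m^k * c
  have key2 : (a + b) % N / M = a / M + b / M + ε - (m : ℤ) ^ k * c := by
    have h1 : (a + b) % N = (a + b) + M * (-((m : ℤ) ^ k * c)) := by
      rw [Int.emod_def, ← hcdef, hNM]; ring
    rw [h1, Int.add_mul_ediv_left _ _ hMpos.ne', key1]
    ring
  rw [hab, key2]
  have : a / M + b / M + ε - (m : ℤ) ^ k * c - (a / M + b / M) =
      ε - (m : ℤ) ^ k * c := by ring
  rw [this]
  have hmod : (ε - (m : ℤ) ^ k * c) % (m : ℤ) ^ k = ε := by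
    rw [sub_eq_add_neg, neg_mul_eq_mul_neg, Int.add_mul_emod_self_left]
    exact Int.emod_eq_of_lt (by rcases hε with h | h <;> simp [h])
      (by rcases hε with h | h <;> simp [h] <;> linarith)
  rw [hmod]
  rcases hε with h | h <;> simp [h]
end

section
/- Let m > 1, n ≥ k ≥ 1 be integers and x₁, x₂ ∈ ℤ. With substr and y₁, y₂ defined as before, (substr(x₁ − x₂, n, n−k) − (y₁ − y₂)) mod m^k ∈ {0, m^k − 1}. -/
lemma ediv_zero_or_neg_one {P : ℤ} (r : ℤ) (hP : 0 < P) (h1 : -P ≤ r) (h2 : r < P) :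
    r / P = 0 ∨ r / P = -1 := by
  have a : r / P < 1 := by rw [Int.ediv_lt_iff_lt_mul hP]; linarith
  have b : -1 ≤ r / P := by rw [Int.le_ediv_iff_mul_le hP]; linarith
  omega

theorem stmt1 (m : ℕ) (hm : 1 < m) (n k : ℕ) (hk : 1 ≤ k) (hkn : k ≤ n)
    (x₁ x₂ : ℤ) :
    (substr m (x₁ - x₂) n (n - k) -
        (substr m x₁ n (n - k) - substr m x₂ n (n - k))) % (m : ℤ) ^ k ∈
      ({0, (m : ℤ) ^ k - 1} : Set ℤ) := by
  have hm' : (1:ℤ) < (m:ℤ) := by exact_mod_cast hm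
  set P : ℤ := (m:ℤ)^(n-k) with hPdef
  set Q : ℤ := (m:ℤ)^k with hQdef
  have hP : 0 < P := pow_pos (by linarith) _
  have hQ1 : 1 < Q := one_lt_pow₀ hm' (by omega)
  have hQ : 0 < Q := by linarith
  have hPQ : 0 < P * Q := mul_pos hP hQ
  have hN : (m:ℤ)^n = P * Q := by rw [hPdef, hQdef, ← pow_add]; congr 1; omega
  have hsub : ∀ x : ℤ, substr m x n (n-k) = (x % (P*Q)) / P := by
    intro x
    unfold substr
    rw [hN, ← hPdef, ← Int.emod_emod_of_dvd x (dvd_mul_right P Q)]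
    rw [Int.emod_def (x % (P*Q)) P]
    rw [sub_sub_cancel, Int.mul_ediv_cancel_left _ (ne_of_gt hP)]
  rw [hsub, hsub, hsub]
  set a := x₁ % (P*Q) with hadef
  set b := x₂ % (P*Q) with hbdef
  have ha0 : 0 ≤ a := Int.emod_nonneg _ (ne_of_gt hPQ)
  have ha1 : a < P*Q := Int.emod_lt_of_pos _ hPQ
  have hb0 : 0 ≤ b := Int.emod_nonneg _ (ne_of_gt hPQ)
  have hb1 : b < P*Q := Int.emod_lt_of_pos _ hPQ
  have hsubmod : (x₁ - x₂) % (P*Q) = (a - b) % (P*Q) := Int.sub_emod _ _ _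
  set d := (a - b) / (P*Q) with hddef
  have hd : d = 0 ∨ d = -1 :=
    ediv_zero_or_neg_one _ hPQ (by linarith) (by linarith)
  have hmodab : (a-b) % (P*Q) = a - b - P*Q*d := by
    rw [Int.emod_def]
  set s := a / P with hsdef
  set t := b / P with htdef
  set ra := a % P with hradef
  set rb := b % P with hrbdef
  have hra0 : 0 ≤ ra := Int.emod_nonneg _ (ne_of_gt hP)
  have hra1 : ra < P := Int.emod_lt_of_pos _ hP
  have hrb0 : 0 ≤ rb := Int.emod_nonneg _ (ne_of_gt hP)
  have hrb1 : rb < P := Int.emod_lt_of_pos _ hP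
  have haeq : a = P * s + ra := by rw [hsdef, hradef]; exact (Int.mul_ediv_add_emod a P).symm
  have hbeq : b = P * t + rb := by rw [htdef, hrbdef]; exact (Int.mul_ediv_add_emod b P).symm
  set e := (ra - rb) / P with hedef
  have he : e = 0 ∨ e = -1 :=
    ediv_zero_or_neg_one _ hP (by linarith) (by linarith)
  have hkey : (a - b - P*Q*d) / P = e + (s - t - Q*d) := by
    have : a - b - P*Q*d = (ra - rb) + (s - t - Q*d) * P := by
      rw [haeq, hbeq]; ring
    rw [this, Int.add_mul_ediv_right _ _ (ne_of_gt hP), hedef]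
  rw [hsubmod, hmodab, hkey]
  have hexpr : e + (s - t - Q*d) - (s - t) = e - Q*d := by ring
  rw [hexpr]
  have hneg1 : (-1 : ℤ) % Q = Q - 1 := by
    have h1 : (-1 : ℤ) % Q = (-1 + Q * 1) % Q := (Int.add_mul_emod_self_left (-1) Q 1).symm
    rw [h1]
    have : (-1 : ℤ) + Q * 1 = Q - 1 := by ring
    rw [this]
    exact Int.emod_eq_of_lt (by linarith) (by linarith)
  rcases hd with hd | hd <;> rcases he with he | he <;> rw [hd, he] <;>
    simp only [Set.mem_insert_iff, Set.mem_singleton_iff]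
  · left
    norm_num
  · right
    simpa using hneg1
  · left
    have h2 : (0 : ℤ) - Q * (-1) = Q := by ring
    rw [h2, Int.emod_self]
  · right
    have h2 : (-1 : ℤ) - Q * (-1) = Q - 1 := by ring
    rw [h2]
    exact Int.emod_eq_of_lt (by linarith) (by linarith)
end

section
/- Let (Ω, 𝒫) be a probability space and A₁, A₂, … a sequence of events such that there exists ε > 0 with limsup_{n→∞} 𝒫(Aₙ | A₁ᶜ ∩ … ∩ Aₜᶜ) > ε for every t ∈ ℕ (whenever the conditioning event has positive probability). Then 𝒫(⋃_{i=1}^n Aᵢ) → 1 as n → ∞. -/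
open MeasureTheory ProbabilityTheory Filter
open scoped ENNReal

/-!
Let `Bₜ = A₁ᶜ ∩ ⋯ ∩ Aₜᶜ`, a decreasing sequence, and `L = ⨅ₜ μ Bₜ`. If `L > 0`, every `Bₜ` is
non-null, so the limsup hypothesis yields `n ≥ t` with `μ (Bₜ ∩ Aₙ) > ε μ Bₜ`; as
`Bₙ ⊆ Bₜ \ Aₙ`, this gives `μ Bₙ + ε μ Bₜ ≤ μ Bₜ`, hence `L + ε L ≤ L`, which is impossible.
So `μ Bₜ → 0`, and the union `A₁ ∪ ⋯ ∪ Aₙ = Bₙᶜ` has probability tending to `1`.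
-/

theorem ENNReal.iInf_eq_zero_of_forall_exists_add_mul_le {ι : Type*} {b : ι → ℝ≥0∞}
    {c : ℝ≥0∞} (hc : c ≠ 0) (hfin : ⨅ i, b i ≠ ∞)
    (h : ∀ i, b i ≠ 0 → ∃ j, b j + c * b i ≤ b i) : ⨅ i, b i = 0 := by
  by_contra hL
  have hb : ∀ i, b i ≠ 0 := fun i hi => hL (le_antisymm (hi ▸ iInf_le b i) bot_le)
  have hle : (⨅ i, b i) + c * ⨅ i, b i ≤ ⨅ i, b i := le_iInf fun i => by
    obtain ⟨j, hj⟩ := h i (hb i)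
    calc (⨅ i, b i) + c * ⨅ i, b i ≤ b j + c * b i := by gcongr <;> exact iInf_le b _
      _ ≤ b i := hj
  exact (ENNReal.lt_add_right hfin (mul_ne_zero hc hL)).not_ge hle

theorem exists_lt_measure_inter_of_lt_limsup_cond {Ω : Type*} [MeasurableSpace Ω]
    {μ : Measure Ω} {s : Set Ω} {A : ℕ → Set Ω} {c : ℝ≥0∞} (hs : MeasurableSet s)
    (hs0 : μ s ≠ 0) (hsfin : μ s ≠ ∞) (h : c < limsup (fun n => μ[A n | s]) atTop) (N : ℕ) :
    ∃ n ≥ N, c * μ s < μ (s ∩ A n) := by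
  obtain ⟨n, hnN, hn⟩ := frequently_atTop.mp (frequently_lt_of_lt_limsup (h := h)) N
  refine ⟨n, hnN, ?_⟩
  rw [← cond_mul_eq_inter' hs hsfin]
  exact ENNReal.mul_lt_mul_left hs0 hsfin hn

section

variable {Ω : Type*} (A : ℕ → Set Ω)

theorem antitone_biInter_Icc_compl : Antitone fun t => ⋂ i ∈ Finset.Icc 1 t, (A i)ᶜ :=
  fun _ _ hst => Set.biInter_subset_biInter_left fun _ hi =>
    Finset.Icc_subset_Icc_right hst hi

theorem biInter_Icc_compl_subset_diff {t n : ℕ} (htn : t ≤ n) (hn : 1 ≤ n) :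
    ⋂ i ∈ Finset.Icc 1 n, (A i)ᶜ ⊆ (⋂ i ∈ Finset.Icc 1 t, (A i)ᶜ) \ A n :=
  fun _ hx => ⟨antitone_biInter_Icc_compl A htn hx,
    Set.mem_iInter₂.mp hx n (Finset.mem_Icc.mpr ⟨hn, le_rfl⟩)⟩

end

/-- Lévy-type lemma: if there is `ε > 0` such that for every `t`, either the
conditioning event `A₁ᶜ ∩ … ∩ Aₜᶜ` is null (in which case the conclusion is
trivial from that index on) or
`limsup_{n→∞} 𝒫(Aₙ | A₁ᶜ ∩ … ∩ Aₜᶜ) > ε`, then `𝒫(⋃_{i=1}^n Aᵢ) → 1`. -/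
theorem stmt2 {Ω : Type*} [MeasurableSpace Ω] (μ : Measure Ω) [IsProbabilityMeasure μ]
    (A : ℕ → Set Ω) (hA : ∀ i, MeasurableSet (A i)) (ε : ℝ) (hε : 0 < ε)
    (h : ∀ t : ℕ,
      μ (⋂ i ∈ Finset.Icc 1 t, (A i)ᶜ) = 0 ∨
      ENNReal.ofReal ε <
        Filter.limsup
          (fun n => ProbabilityTheory.cond μ (⋂ i ∈ Finset.Icc 1 t, (A i)ᶜ) (A n))
          Filter.atTop) :
    Filter.Tendsto (fun n => μ (⋃ i ∈ Finset.Icc 1 n, A i)) Filter.atTop (nhds 1) := by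
  set B : ℕ → Set Ω := fun t => ⋂ i ∈ Finset.Icc 1 t, (A i)ᶜ
  have hB : ∀ t, MeasurableSet (B t) := fun t =>
    .biInter (Set.to_countable _) fun i _ => (hA i).compl
  have hinf : ⨅ t, μ (B t) = 0 := by
    refine ENNReal.iInf_eq_zero_of_forall_exists_add_mul_le (ENNReal.ofReal_pos.mpr hε).ne'
      ((iInf_le (fun t => μ (B t)) 0).trans_lt (measure_lt_top μ _)).ne fun t ht => ?_
    obtain ⟨n, hn, hlt⟩ := exists_lt_measure_inter_of_lt_limsup_cond (hB t) ht
      (measure_ne_top μ _) ((h t).resolve_left ht) (max t 1)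
    refine ⟨n, ?_⟩
    calc μ (B n) + ENNReal.ofReal ε * μ (B t) ≤ μ (B t \ A n) + μ (B t ∩ A n) :=
          add_le_add (measure_mono (biInter_Icc_compl_subset_diff A (le_of_max_le_left hn)
            (le_of_max_le_right hn))) hlt.le
      _ = μ (B t) := by rw [add_comm, measure_inter_add_sdiff _ (hA n)]
  have hB0 : Tendsto (fun t => μ (B t)) atTop (nhds 0) :=
    hinf ▸ tendsto_atTop_iInf fun _ _ hst => measure_mono (antitone_biInter_Icc_compl A hst)
  have hunion : ∀ n, μ (⋃ i ∈ Finset.Icc 1 n, A i) = 1 - μ (B n) := fun n => by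
    rw [← prob_compl_eq_one_sub (hB n)]
    simp only [B, Set.compl_iInter, compl_compl]
  simp only [hunion]
  simpa using ENNReal.Tendsto.sub tendsto_const_nhds hB0 (.inl ENNReal.one_ne_top)
end

section
/- Let (Ω, 𝒫) be a probability space, B an event with 𝒫(B) > 0, j ∈ ℕ, and C_j, C_{j+1}, … events such that there exists ε' > 0 with lim_{n→∞} 𝒫(Cₙ | C_jᶜ ∩ … ∩ C_tᶜ ∩ B) = ε' for every t ≥ j (when the conditioning event has positive probability). Then lim_{n→∞} 𝒫(⋃_{i=j}^n Cᵢ | B) = 1. -/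
/-!
Conditioning on `B` reduces the claim to the unconditional one for the probability measure
`μ[|B]`, since `μ[|B][|A] = μ[|A ∩ B]`. There the sets `Aₜ = C_jᶜ ∩ … ∩ C_tᶜ` decrease, and
whenever `μ Aₙ > 0` some later `Cₘ` carries at least a fixed fraction `e ∈ (0, ε)` of `Aₙ`, so
`μ Aₘ ≤ μ (Aₙ \ Cₘ) ≤ (1 - e) μ Aₙ`. An antitone sequence admitting such contractions tends
to `0`, hence `μ (C_j ∪ … ∪ Cₙ) = 1 - μ Aₙ → 1`.
-/

open MeasureTheory ProbabilityTheory Filter Topology ENNReal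

theorem tendsto_nhds_zero_of_antitone_of_exists_le_mul {u : ℕ → ℝ≥0∞} (hu : Antitone u)
    (hu₀ : u 0 ≠ ∞) {c : ℝ≥0∞} (hc : c < 1) (h : ∀ᶠ n in atTop, ∃ m, u m ≤ c * u n) :
    Tendsto u atTop (𝓝 0) := by
  have hL := tendsto_atTop_iInf hu
  have hLc : ⨅ n, u n ≤ c * ⨅ n, u n :=
    ge_of_tendsto (ENNReal.Tendsto.const_mul hL (Or.inr (hc.trans one_lt_top).ne))
      (h.mono fun n ⟨m, hm⟩ => (iInf_le u m).trans hm)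
  have hLtop : ⨅ n, u n ≠ ∞ := ne_top_of_le_ne_top hu₀ (iInf_le u 0)
  suffices hL₀ : ⨅ n, u n = 0 by rwa [hL₀] at hL
  by_contra hL₀
  exact (hLc.trans_lt (by simpa [mul_comm] using ENNReal.mul_lt_mul_right hL₀ hLtop hc)).false

theorem measure_sdiff_le_one_sub_mul_of_le_cond {Ω : Type*} [MeasurableSpace Ω]
    {μ : Measure Ω} [IsFiniteMeasure μ] {D C : Set Ω} (hD : MeasurableSet D)
    (hC : MeasurableSet C) {e : ℝ≥0∞} (he : e ≤ μ[C | D]) :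
    μ (D \ C) ≤ (1 - e) * μ D := by
  have hinter : e * μ D ≤ μ (D ∩ C) :=
    (mul_le_mul_left he _).trans_eq (cond_mul_eq_inter hD C μ)
  calc μ (D \ C) = μ D - μ (D ∩ C) :=
        ENNReal.eq_sub_of_add_eq (measure_ne_top μ _) (measure_sdiff_add_inter D hC)
    _ ≤ μ D - e * μ D := tsub_le_tsub_left hinter _
    _ = (1 - e) * μ D := by rw [ENNReal.sub_mul fun _ _ => measure_ne_top μ D, one_mul]

theorem tendsto_measure_biInter_Icc_compl_nhds_zero {Ω : Type*} [MeasurableSpace Ω]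
    {μ : Measure Ω} [IsFiniteMeasure μ] {C : ℕ → Set Ω} (hC : ∀ i, MeasurableSet (C i))
    {j : ℕ} {ε : ℝ≥0∞} (hε : ε ≠ 0)
    (h : ∀ t ≥ j, μ (⋂ i ∈ Finset.Icc j t, (C i)ᶜ) = 0 ∨
      Tendsto (fun n => μ[C n | ⋂ i ∈ Finset.Icc j t, (C i)ᶜ]) atTop (𝓝 ε)) :
    Tendsto (fun t => μ (⋂ i ∈ Finset.Icc j t, (C i)ᶜ)) atTop (𝓝 0) := by
  set A : ℕ → Set Ω := fun t => ⋂ i ∈ Finset.Icc j t, (C i)ᶜ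
  have hA : ∀ t, MeasurableSet (A t) := fun t =>
    Finset.measurableSet_biInter _ fun i _ => (hC i).compl
  have hA_anti : Antitone A := fun a b hab =>
    Set.biInter_subset_biInter_left (Finset.coe_subset.2 (Finset.Icc_subset_Icc_right hab))
  have hA_sub : ∀ n m, j ≤ n → n ≤ m → A m ⊆ A n \ C m := fun n m hn hnm x hx =>
    ⟨hA_anti hnm hx, Set.mem_iInter₂.1 hx m (Finset.mem_Icc.2 ⟨hn.trans hnm, le_rfl⟩)⟩
  obtain ⟨e, he, heε⟩ := exists_between (pos_iff_ne_zero.2 hε)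
  refine tendsto_nhds_zero_of_antitone_of_exists_le_mul
    (fun a b hab => measure_mono (hA_anti hab)) (measure_ne_top μ _)
    (ENNReal.sub_lt_self one_ne_top one_ne_zero he.ne')
    ((eventually_ge_atTop j).mono fun n hn => ?_)
  rcases h n hn with h0 | hlim
  · exact ⟨n, by simp only [h0, mul_zero, le_refl]⟩
  · obtain ⟨m, hem, hnm⟩ :=
      ((hlim.eventually (eventually_ge_nhds heε)).and (eventually_ge_atTop n)).exists
    exact ⟨m, (measure_mono (hA_sub n m hn hnm)).trans
      (measure_sdiff_le_one_sub_mul_of_le_cond (hA n) (hC m) hem)⟩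

theorem tendsto_measure_biUnion_Icc_nhds_one {Ω : Type*} [MeasurableSpace Ω]
    {μ : Measure Ω} [IsProbabilityMeasure μ] {C : ℕ → Set Ω} (hC : ∀ i, MeasurableSet (C i))
    {j : ℕ} {ε : ℝ≥0∞} (hε : ε ≠ 0)
    (h : ∀ t ≥ j, μ (⋂ i ∈ Finset.Icc j t, (C i)ᶜ) = 0 ∨
      Tendsto (fun n => μ[C n | ⋂ i ∈ Finset.Icc j t, (C i)ᶜ]) atTop (𝓝 ε)) :
    Tendsto (fun n => μ (⋃ i ∈ Finset.Icc j n, C i)) atTop (𝓝 1) := by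
  have hcompl : ∀ n, 1 - μ (⋂ i ∈ Finset.Icc j n, (C i)ᶜ) = μ (⋃ i ∈ Finset.Icc j n, C i) :=
    fun n => by
      rw [← prob_compl_eq_one_sub (Finset.measurableSet_biInter _ fun i _ => (hC i).compl),
        Set.compl_iInter₂]
      simp only [compl_compl]
  simpa only [hcompl, tsub_zero] using ENNReal.Tendsto.sub tendsto_const_nhds
    (tendsto_measure_biInter_Icc_compl_nhds_zero hC hε h) (Or.inl one_ne_top)

/-- Conditional version of the Lévy-type lemma: if `𝒫(B) > 0` and there is
`ε' > 0` such that for every `t ≥ j`, either the conditioning event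
`C_jᶜ ∩ … ∩ C_tᶜ ∩ B` is null or
`lim_{n→∞} 𝒫(Cₙ | C_jᶜ ∩ … ∩ C_tᶜ ∩ B) = ε'`, then
`𝒫(⋃_{i=j}^n Cᵢ | B) → 1`. -/
theorem stmt3 {Ω : Type*} [MeasurableSpace Ω] (μ : Measure Ω) [IsProbabilityMeasure μ]
    (B : Set Ω) (hBmeas : MeasurableSet B) (hB : 0 < μ B)
    (j : ℕ) (C : ℕ → Set Ω) (hC : ∀ i, MeasurableSet (C i))
    (ε' : ℝ) (hε' : 0 < ε')
    (h : ∀ t : ℕ, j ≤ t →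
      μ ((⋂ i ∈ Finset.Icc j t, (C i)ᶜ) ∩ B) = 0 ∨
      Filter.Tendsto
        (fun n => ProbabilityTheory.cond μ ((⋂ i ∈ Finset.Icc j t, (C i)ᶜ) ∩ B) (C n))
        Filter.atTop (nhds (ENNReal.ofReal ε'))) :
    Filter.Tendsto (fun n => ProbabilityTheory.cond μ B (⋃ i ∈ Finset.Icc j n, C i))
      Filter.atTop (nhds 1) := by
  have := cond_isProbabilityMeasure (μ := μ) hB.ne'
  refine tendsto_measure_biUnion_Icc_nhds_one hC (ENNReal.ofReal_pos.2 hε').ne' fun t ht => ?_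
  have hA : MeasurableSet (⋂ i ∈ Finset.Icc j t, (C i)ᶜ) :=
    Finset.measurableSet_biInter _ fun i _ => (hC i).compl
  rw [cond_cond_eq_cond_inter hBmeas hA, cond_apply hBmeas, Set.inter_comm B]
  exact (h t ht).imp_left fun h0 => by rw [h0, mul_zero]
end

section
/- Let f₁, …, f_s : ℤ_m → ℤ_m be 1-Lipschitz functions that are uniform with each suffix. Then for all fixed j, d, k ∈ ℕ, β ∈ {0,…,m^d−1}, a ∈ {0,…,m^k−1}^s, the conditional probability μ(⋃_{i=j}^n {φᵢ ∈ J_k(a)} | ξ_d = β) tends to 1 as n → ∞. -/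
open MeasureTheory ProbabilityTheory Filter

/-- The ring `ℤ_m` of `m`-adic integers, modelled as base-`m` digit sequences. -/
abbrev Zm (m : ℕ) := ℕ → Fin m

/-- `ω mod m^n`: the natural number formed by the first `n` base-`m` digits of `ω`. -/
def modPow {m : ℕ} (ω : Zm m) (n : ℕ) : ℕ :=
  ∑ i ∈ Finset.range n, (ω i).val * m ^ i

/-- `f : ℤ_m → ℤ_m` is 1-Lipschitz: the first `n` digits of `f ω` depend only
on the first `n` digits of `ω`. -/
def Lip1 {m : ℕ} (f : Zm m → Zm m) : Prop :=
  ∀ (n : ℕ) (ω₁ ω₂ : Zm m), modPow ω₁ n = modPow ω₂ n → modPow (f ω₁) n = modPow (f ω₂) n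

/-- `μ` is the normalized Haar measure on `ℤ_m`: every ball
`{ω : ω mod m^k = a}` has measure `m^{-k}`. -/
def IsHaar {m : ℕ} (μ : Measure (Zm m)) : Prop :=
  ∀ (k a : ℕ), a < m ^ k → μ {ω | modPow ω k = a} = ((m : ENNReal) ^ k)⁻¹

/-- The vector `φₙ(ω) = ((f₁(ω) mod m^n)/m^n, …, (f_s(ω) mod m^n)/m^n)`. -/
noncomputable def phi {m s : ℕ} (f : Fin s → Zm m → Zm m) (n : ℕ) (ω : Zm m) :
    Fin s → ℝ :=
  fun i => (modPow (f i ω) n : ℝ) / (m : ℝ) ^ n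

/-- The cube `J_k(a) = ∏ᵢ [aᵢ/m^k, (aᵢ+1)/m^k) ⊂ [0,1)^s`. -/
def Jcube (m k : ℕ) {s : ℕ} (a : Fin s → ℕ) : Set (Fin s → ℝ) :=
  {x | ∀ i, (a i : ℝ) / (m : ℝ) ^ k ≤ x i ∧ x i < ((a i : ℝ) + 1) / (m : ℝ) ^ k}

/-- The suffix event `ξ_d = β`, i.e. `ω mod m^d = β`. -/
def suffixEvent (m d β : ℕ) : Set (Zm m) := {ω | modPow ω d = β}

/-- The uniform (Lebesgue) probability distribution on the cube `[0,1)^s`. -/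
noncomputable def unifCube (s : ℕ) : Measure (Fin s → ℝ) :=
  volume.restrict (Set.univ.pi fun _ => Set.Ico (0 : ℝ) 1)

/-- The collection `f₁,…,f_s` generates a uniform distribution: `φₙ` converges
weakly to the uniform distribution on `[0,1)^s`. -/
def GeneratesUniform {m s : ℕ} (μ : Measure (Zm m)) (f : Fin s → Zm m → Zm m) : Prop :=
  ∀ g : BoundedContinuousFunction (Fin s → ℝ) ℝ,
    Tendsto (fun n => ∫ ω, g (phi f n ω) ∂μ) atTop (nhds (∫ x, g x ∂(unifCube s)))

/-- The collection `f₁,…,f_s` is uniform with each suffix: conditionally on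
`ξ_d = β`, the probability that `φₙ` hits any cube `J_k(a)` tends to `m^{-ks}`. -/
def UniformWithSuffix {m s : ℕ} (μ : Measure (Zm m)) (f : Fin s → Zm m → Zm m) : Prop :=
  ∀ (k d : ℕ) (a : Fin s → ℕ), (∀ i, a i < m ^ k) → ∀ β < m ^ d,
    Tendsto
      (fun n => ProbabilityTheory.cond μ (suffixEvent m d β) {ω | phi f n ω ∈ Jcube m k a})
      atTop (nhds (((m : ENNReal) ^ (k * s))⁻¹))

/-! Write `E i = {φᵢ ∈ J_k(a)}` and `G n = {ξ_d = β} \ ⋃_{j ≤ i ≤ n} E i`. As the `fᵢ` are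
1-Lipschitz, `E i` depends only on `ω mod m^i`, so `G N` is a finite union of balls
`{ξ_M = γ}` with `M = max d N`. Uniformity with each suffix gives one `ε > 0` such that, on each
of these balls, `E n` eventually has conditional probability at least `ε`; hence
`μ (G n) ≤ (1 - ε) μ (G N)` for some `n ≥ N`. Iterating, `μ (G n) → 0`, and this is the claim. -/

open scoped ENNReal Topology

section Digits

variable {m : ℕ}

lemma modPow_succ (ω : Zm m) (n : ℕ) : modPow ω (n + 1) = modPow ω n + (ω n).val * m ^ n :=
  Finset.sum_range_succ _ _

lemma modPow_lt (ω : Zm m) (n : ℕ) : modPow ω n < m ^ n := by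
  induction n with
  | zero => simp [modPow]
  | succ n ih =>
    calc modPow ω (n + 1) = modPow ω n + (ω n).val * m ^ n := modPow_succ ω n
      _ < ((ω n).val + 1) * m ^ n := by linarith
      _ ≤ m * m ^ n := Nat.mul_le_mul_right _ (ω n).isLt
      _ = m ^ (n + 1) := (pow_succ' m n).symm

lemma modPow_mod_pow (ω : Zm m) {i n : ℕ} (h : i ≤ n) : modPow ω n % m ^ i = modPow ω i := by
  induction n, h using Nat.le_induction with
  | base => exact Nat.mod_eq_of_lt (modPow_lt ω i)
  | succ n hin ih =>
    obtain ⟨l, rfl⟩ := Nat.exists_eq_add_of_le hin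
    rw [modPow_succ, pow_add, ← mul_assoc, mul_comm _ (m ^ i), mul_assoc,
      Nat.add_mul_mod_self_left, ih]

lemma measurable_modPow (n : ℕ) : Measurable fun ω : Zm m => modPow ω n :=
  Finset.measurable_sum _ fun i _ =>
    (measurable_from_top.comp (measurable_pi_apply i)).mul measurable_const

end Digits

/-- `σ(ξ_M)`: the events that depend only on `ω mod m^M`. -/
abbrev cylinderSigma (m M : ℕ) : MeasurableSpace (Zm m) :=
  MeasurableSpace.comap (fun ω => modPow ω M) ⊤

section CylinderSigma

variable {m : ℕ}

lemma measurableSet_cylinderSigma_of_modPow_eq {M : ℕ} {C : Set (Zm m)}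
    (hC : ∀ ω ω', modPow ω M = modPow ω' M → (ω ∈ C ↔ ω' ∈ C)) :
    MeasurableSet[cylinderSigma m M] C :=
  ⟨(fun ω => modPow ω M) '' C, trivial, Set.ext fun ω =>
    ⟨fun ⟨ω', hω', h⟩ => (hC ω' ω h).1 hω', fun hω => ⟨ω, hω, rfl⟩⟩⟩

lemma cylinderSigma_mono {M M' : ℕ} (h : M ≤ M') : cylinderSigma m M ≤ cylinderSigma m M' := by
  have : (fun ω : Zm m => modPow ω M) = (· % m ^ M) ∘ fun ω => modPow ω M' :=
    funext fun ω => (modPow_mod_pow ω h).symm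
  rw [cylinderSigma, cylinderSigma, this, ← MeasurableSpace.comap_comp]
  exact MeasurableSpace.comap_mono le_top

lemma cylinderSigma_le (M : ℕ) : cylinderSigma m M ≤ MeasurableSpace.pi :=
  (measurable_modPow M).comap_le

lemma measurableSet_suffixEvent (d β : ℕ) :
    MeasurableSet[cylinderSigma m d] (suffixEvent m d β) :=
  ⟨{β}, trivial, rfl⟩

end CylinderSigma

lemma phi_eq_of_modPow_eq {m s : ℕ} {f : Fin s → Zm m → Zm m} (hf : ∀ i, Lip1 (f i)) {n : ℕ}
    {ω ω' : Zm m} (h : modPow ω n = modPow ω' n) : phi f n ω = phi f n ω' :=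
  funext fun i => by simp only [phi, hf i n ω ω' h]

lemma measurableSet_phi_mem {m s : ℕ} {f : Fin s → Zm m → Zm m} (hf : ∀ i, Lip1 (f i)) (n : ℕ)
    (J : Set (Fin s → ℝ)) : MeasurableSet[cylinderSigma m n] {ω | phi f n ω ∈ J} :=
  measurableSet_cylinderSigma_of_modPow_eq fun _ _ h =>
    Iff.of_eq (congrArg (· ∈ J) (phi_eq_of_modPow_eq hf h))

lemma eventually_mul_measure_le_measure_inter {m M : ℕ} {μ : Measure (Zm m)}
    [IsFiniteMeasure μ] {E : ℕ → Set (Zm m)} (hEm : ∀ n, MeasurableSet (E n))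
    {ε : ℝ≥0∞}
    (hE : ∀ γ < m ^ M, ∀ᶠ n in atTop, ε ≤ μ[E n | suffixEvent m M γ])
    {C : Set (Zm m)} (hC : MeasurableSet[cylinderSigma m M] C) :
    ∀ᶠ n in atTop, ε * μ C ≤ μ (C ∩ E n) := by
  classical
  obtain ⟨S, -, rfl⟩ := hC
  set T := (Finset.range (m ^ M)).filter (· ∈ S)
  have hT : (fun ω => modPow ω M) ⁻¹' S = ⋃ γ ∈ T, suffixEvent m M γ := by
    ext ω
    simp [T, suffixEvent, modPow_lt]
  have hmeas (γ : ℕ) : MeasurableSet (suffixEvent m M γ) :=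
    cylinderSigma_le M _ (measurableSet_suffixEvent M γ)
  have hdisj : (T : Set ℕ).PairwiseDisjoint (suffixEvent m M) := Set.pairwiseDisjoint_fiber _ _
  filter_upwards [(Finset.eventually_all T).2 fun γ hγ =>
    hE γ (Finset.mem_range.1 (Finset.mem_filter.1 hγ).1)] with n hn
  rw [hT, Set.iUnion₂_inter, measure_biUnion_finset hdisj fun γ _ => hmeas γ,
    measure_biUnion_finset (hdisj.mono fun γ => Set.inter_subset_left)
      fun γ _ => (hmeas γ).inter (hEm n), Finset.mul_sum]
  refine Finset.sum_le_sum fun γ hγ => ?_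
  rw [← cond_mul_eq_inter (hmeas γ)]
  exact mul_le_mul_left (hn γ hγ) _

lemma measure_sdiff_le_one_sub_mul {Ω : Type*} [MeasurableSpace Ω] {μ : Measure Ω}
    [IsFiniteMeasure μ] {s t : Set Ω} (ht : MeasurableSet t) {ε : ℝ≥0∞}
    (h : ε * μ s ≤ μ (s ∩ t)) : μ (s \ t) ≤ (1 - ε) * μ s :=
  calc μ (s \ t) = μ s - μ (s ∩ t) :=
        ENNReal.eq_sub_of_add_eq (measure_ne_top μ _) (measure_sdiff_add_inter s ht)
    _ ≤ μ s - ε * μ s := tsub_le_tsub_left h _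
    _ = (1 - ε) * μ s := by rw [ENNReal.sub_mul fun _ _ => measure_ne_top μ s, one_mul]

lemma ENNReal.tendsto_atTop_zero_of_antitone_of_exists_le_mul {u : ℕ → ℝ≥0∞}
    (hu : Antitone u) (hu0 : u 0 ≠ ∞) {δ : ℝ≥0∞} (hδ : δ < 1)
    (h : ∀ N, ∃ n, u n ≤ δ * u N) :
    Tendsto u atTop (𝓝 0) := by
  have hlim := tendsto_atTop_iInf hu
  have hle : ⨅ n, u n ≤ δ * ⨅ n, u n :=
    ge_of_tendsto' (ENNReal.Tendsto.const_mul hlim (Or.inr hδ.ne_top)) fun N =>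
      let ⟨n, hn⟩ := h N; (iInf_le u n).trans hn
  have hfin : ⨅ n, u n ≠ ∞ := ne_top_of_le_ne_top hu0 (iInf_le u 0)
  suffices ⨅ n, u n = 0 by rwa [this] at hlim
  by_contra h0
  exact hle.not_gt <| by simpa using ENNReal.mul_lt_mul_left h0 hfin hδ

lemma tendsto_cond_one_of_tendsto_measure_sdiff {Ω : Type*} [MeasurableSpace Ω]
    {μ : Measure Ω} [IsFiniteMeasure μ] {B : Set Ω} (hB : MeasurableSet B) (hB0 : μ B ≠ 0)
    {U : ℕ → Set Ω} (hU : ∀ n, MeasurableSet (U n))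
    (h : Tendsto (fun n => μ (B \ U n)) atTop (𝓝 0)) :
    Tendsto (fun n => μ[U n | B]) atTop (𝓝 1) := by
  have : IsProbabilityMeasure μ[|B] := cond_isProbabilityMeasure hB0
  have hc : Tendsto (fun n => μ[(U n)ᶜ | B]) atTop (𝓝 0) := by
    simpa [cond_apply hB, ← Set.sdiff_eq] using
      ENNReal.Tendsto.const_mul h (Or.inr (ENNReal.inv_ne_top.2 hB0))
  have hcompl (n : ℕ) : μ[U n | B] = 1 - μ[(U n)ᶜ | B] := by
    rw [← prob_compl_eq_one_sub (hU n).compl, compl_compl]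
  simpa only [hcompl, tsub_zero, Function.comp_def] using
    ((ENNReal.continuous_sub_left ENNReal.one_ne_top).tendsto 0).comp hc

lemma tendsto_measure_sdiff_biUnion_Icc {m d j : ℕ} {μ : Measure (Zm m)}
    [IsFiniteMeasure μ] {B : Set (Zm m)} (hB : MeasurableSet[cylinderSigma m d] B)
    {E : ℕ → Set (Zm m)} (hE : ∀ i, MeasurableSet[cylinderSigma m i] (E i))
    {ε : ℝ≥0∞} (hε : ε ≠ 0)
    (hcond : ∀ M, ∀ γ < m ^ M, ∀ᶠ n in atTop, ε ≤ μ[E n | suffixEvent m M γ]) :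
    Tendsto (fun n => μ (B \ ⋃ i ∈ Finset.Icc j n, E i)) atTop (𝓝 0) := by
  have hEm (i : ℕ) : MeasurableSet (E i) := cylinderSigma_le i _ (hE i)
  have hG (N : ℕ) :
      MeasurableSet[cylinderSigma m (max d N)] (B \ ⋃ i ∈ Finset.Icc j N, E i) :=
    (cylinderSigma_mono (le_max_left d N) _ hB).diff <|
      Finset.measurableSet_biUnion _ fun i hi =>
        cylinderSigma_mono ((Finset.mem_Icc.1 hi).2.trans (le_max_right d N)) _ (hE i)
  refine ENNReal.tendsto_atTop_zero_of_antitone_of_exists_le_mul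
    (fun N n hNn => measure_mono ?_) (measure_ne_top μ _)
    (ENNReal.sub_lt_self ENNReal.one_ne_top one_ne_zero hε) fun N => ?_
  · exact Set.sdiff_subset_sdiff_right <| Set.biUnion_subset_biUnion_left <|
      Finset.coe_subset.2 (Finset.Icc_subset_Icc_right hNn)
  obtain ⟨n, hn, hNn⟩ := ((eventually_mul_measure_le_measure_inter hEm (hcond _) (hG N)).and
    (eventually_ge_atTop (max j N))).exists
  refine ⟨n, (measure_mono ?_).trans (measure_sdiff_le_one_sub_mul (hEm n) hn)⟩
  intro ω
  simp only [Set.mem_sdiff, Set.mem_iUnion, Finset.mem_Icc, max_le_iff] at hNn ⊢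
  grind

theorem stmt12_general (m s : ℕ)
    (μ : Measure (Zm m)) [IsProbabilityMeasure μ]
    (f : Fin s → Zm m → Zm m) (hf : ∀ i, Lip1 (f i))
    (h : UniformWithSuffix μ f)
    (j d k : ℕ) (β : ℕ) (hβ : β < m ^ d)
    (a : Fin s → ℕ) (ha : ∀ i, a i < m ^ k) :
    Tendsto
      (fun n => ProbabilityTheory.cond μ (suffixEvent m d β)
        (⋃ i ∈ Finset.Icc j n, {ω | phi f i ω ∈ Jcube m k a}))
      atTop (nhds 1) := by
  set E : ℕ → Set (Zm m) := fun i => {ω | phi f i ω ∈ Jcube m k a}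
  have hE (i : ℕ) : MeasurableSet[cylinderSigma m i] (E i) := measurableSet_phi_mem hf i _
  have hB := measurableSet_suffixEvent (m := m) d β
  obtain ⟨ε, hε0, hεc⟩ := exists_between <|
    ENNReal.inv_pos.2 (ENNReal.pow_ne_top (ENNReal.natCast_ne_top m) (n := k * s))
  have hB0 : μ (suffixEvent m d β) ≠ 0 := fun hB0 => by
    have hlim : Tendsto (fun n => μ[E n | suffixEvent m d β]) atTop (𝓝 _) :=
      h k d a ha β hβ
    simp only [cond_eq_zero_of_meas_eq_zero hB0, Measure.coe_zero, Pi.zero_apply] at hlim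
    exact (hε0.trans hεc).ne (tendsto_nhds_unique tendsto_const_nhds hlim)
  refine tendsto_cond_one_of_tendsto_measure_sdiff (cylinderSigma_le d _ hB) hB0
    (fun n => Finset.measurableSet_biUnion _ fun i _ => cylinderSigma_le i _ (hE i)) ?_
  exact tendsto_measure_sdiff_biUnion_Icc hB hE hε0.ne'
    fun M γ hγ => (h k M a ha γ hγ).eventually (eventually_ge_nhds hεc)

/-- If `f₁,…,f_s` is uniform with each suffix, then conditionally on
`ξ_d = β` the probability that `φᵢ ∈ J_k(a)` for at least one `i` with
`j ≤ i ≤ n` tends to `1` as `n → ∞`. -/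
theorem stmt12 (m s : ℕ) (hm : 1 < m) (hs : 1 ≤ s)
    (μ : Measure (Zm m)) [IsProbabilityMeasure μ] (hμ : IsHaar μ)
    (f : Fin s → Zm m → Zm m) (hf : ∀ i, Lip1 (f i))
    (h : UniformWithSuffix μ f)
    (j d k : ℕ) (β : ℕ) (hβ : β < m ^ d)
    (a : Fin s → ℕ) (ha : ∀ i, a i < m ^ k) :
    Tendsto
      (fun n => ProbabilityTheory.cond μ (suffixEvent m d β)
        (⋃ i ∈ Finset.Icc j n, {ω | phi f i ω ∈ Jcube m k a}))
      atTop (nhds 1) :=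
  stmt12_general m s μ f hf h j d k β hβ a ha
end
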